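/- For γ ∈ (0,1) the Legendre coefficients of the inverse multiquadric kernel are all strictly positive (they equal γ^d > 0), hence by Schoenberg's criterion the kernel K(x,y) = (1 − 2γ xᵀy + γ²)^{-1/2} is strictly positive definite on S²: for any distinct x_1,…,x_n ∈ S² and nonzero a ∈ ℝⁿ, Σ_{i,j} a_i a_j K(x_i,x_j) > 0. -/

import Mathlib

/-!
Put `s = 2γ / (1 + γ²)`, so that `0 < s < 1` and `1 - 2γu + γ² = (1 + γ²)(1 - su)`. The binomial
series of `(1 - z)^(-1/2)` then writes the kernel as `Σₘ cₘ uᵐ` with every `cₘ > 0`, convergent for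
`u = xᵀy ∈ [-1, 1]`. Each kernel `(xᵀy)ᵐ` is positive semidefinite (Schur product theorem applied
to the Gram matrix), so the quadratic form is a series of nonnegative terms. If all of them
vanished, every Hadamard power of the Gram matrix would annihilate `a`; reading off row `j`, where
`a_j ≠ 0`, gives `Σᵢ aᵢ tᵢᵐ = 0` for all `m`, with `tᵢ = x_jᵀxᵢ < 1 = t_j` for `i ≠ j`. A polynomial
vanishing at every `tᵢ` with `i ≠ j` but not at `t_j` then forces `a_j = 0`.
-/

noncomputable section

/-- Euclidean 3-space. -/
abbrev E3 := EuclideanSpace ℝ (Fin 3)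

/-- The unit sphere S² ⊂ ℝ³. -/
abbrev S2 := Metric.sphere (0 : E3) 1

/-- The geodesic distance `g(x,y) = arccos(xᵀy)` on the unit sphere. -/
def geo (x y : S2) : ℝ := Real.arccos (inner ℝ (x : E3) (y : E3))

section

open Finset Function Metric
open scoped RealInnerProductSpace Matrix

theorem Ring.multichoose_pos {r : ℝ} (hr : 0 < r) (n : ℕ) : 0 < Ring.multichoose r n := by
  have h := Ring.factorial_nsmul_multichoose_eq_ascPochhammer r n
  rw [Polynomial.ascPochhammer_smeval_eq_eval, nsmul_eq_mul] at h
  exact pos_of_mul_pos_right (h ▸ ascPochhammer_pos n r hr) (by positivity)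

theorem Real.hasSum_multichoose_mul_pow {z : ℝ} (hz : |z| < 1) (a : ℝ) :
    HasSum (fun n => Ring.multichoose a n * z ^ n) ((1 - z) ^ a)⁻¹ := by
  have := (Real.one_div_one_sub_rpow_hasFPowerSeriesOnBall_zero a).hasSum
    (y := z) (by simpa [enorm_eq_nnnorm, ← NNReal.coe_lt_coe] using hz)
  simpa [FormalMultilinearSeries.ofScalars_apply_eq, Ring.multichoose_eq, mul_comm] using this

theorem eq_zero_of_forall_sum_mul_pow_eq_zero {ι R : Type*} [Fintype ι] [CommRing R] [IsDomain R]
    {t a : ι → R} {j : ι} (ht : ∀ i ≠ j, t i ≠ t j) (h : ∀ m : ℕ, ∑ i, a i * t i ^ m = 0) :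
    a j = 0 := by
  classical
  open Polynomial in
  set p : R[X] := ∏ i ∈ univ.erase j, (X - C (t i))
  have hp : ∀ i, p.eval (t i) = 0 ↔ i ≠ j := fun i => by
    simp only [p, Polynomial.eval_prod, Polynomial.eval_sub, Polynomial.eval_X,
      Polynomial.eval_C, prod_eq_zero_iff, mem_erase, mem_univ, and_true, sub_eq_zero]
    exact ⟨fun ⟨k, hk, hik⟩ hij => ht k hk (hij ▸ hik).symm, fun hij => ⟨i, hij, rfl⟩⟩
  have hsum : ∑ i, a i * p.eval (t i) = 0 := by
    simp_rw [Polynomial.eval_eq_sum_range, mul_sum]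
    rw [sum_comm]
    refine sum_eq_zero fun k _ => ?_
    simp_rw [mul_left_comm (a _), ← mul_sum, h, mul_zero]
  rw [sum_eq_single j (fun i _ hij => by rw [(hp i).2 hij, mul_zero]) (by simp)] at hsum
  exact (mul_eq_zero.1 hsum).resolve_right (by simp [hp])

section InnerPow

variable {E : Type*} [NormedAddCommGroup E] [InnerProductSpace ℝ E] {ι : Type*} [Fintype ι]

theorem Matrix.posSemidef_of_inner_pow (v : ι → E) (m : ℕ) :
    (Matrix.of fun i j => ⟪v i, v j⟫ ^ m).PosSemidef := by
  induction m with
  | zero => simpa [Matrix.gram] using Matrix.posSemidef_gram ℝ (fun _ : ι => (1 : ℝ))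
  | succ m ih =>
    have h : (Matrix.of fun i j => ⟪v i, v j⟫ ^ (m + 1)) =
        (Matrix.of fun i j => ⟪v i, v j⟫ ^ m) ⊙ Matrix.gram ℝ v := by
      ext i j
      simp [pow_succ, Matrix.gram]
    exact h ▸ ih.hadamard (Matrix.posSemidef_gram ℝ v)

theorem dotProduct_of_inner_pow_mulVec (v : ι → E) (a : ι → ℝ) (m : ℕ) :
    a ⬝ᵥ (Matrix.of fun i j => ⟪v i, v j⟫ ^ m) *ᵥ a = ∑ i, ∑ j, a i * a j * ⟪v i, v j⟫ ^ m := by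
  simp only [dotProduct, Matrix.mulVec, Matrix.of_apply, mul_sum]
  exact sum_congr rfl fun i _ => sum_congr rfl fun j _ => by ring

theorem sum_mul_mul_inner_pow_nonneg (v : ι → E) (a : ι → ℝ) (m : ℕ) :
    0 ≤ ∑ i, ∑ j, a i * a j * ⟪v i, v j⟫ ^ m := by
  simpa [dotProduct_of_inner_pow_mulVec] using
    (Matrix.posSemidef_of_inner_pow v m).dotProduct_mulVec_nonneg a

theorem exists_sum_mul_mul_inner_pow_pos {x : ι → sphere (0 : E) 1} (hx : Injective x)
    {a : ι → ℝ} (ha : a ≠ 0) : ∃ m : ℕ, 0 < ∑ i, ∑ j, a i * a j * ⟪(x i : E), x j⟫ ^ m := by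
  obtain ⟨j, haj⟩ := Function.ne_iff.1 ha
  by_contra! h
  have hker (m : ℕ) : (Matrix.of fun i k => ⟪(x i : E), x k⟫ ^ m) *ᵥ a = 0 := by
    refine ((Matrix.posSemidef_of_inner_pow _ m).dotProduct_mulVec_zero_iff a).1 ?_
    rw [star_trivial, dotProduct_of_inner_pow_mulVec]
    exact (h m).antisymm (sum_mul_mul_inner_pow_nonneg _ a m)
  refine haj (eq_zero_of_forall_sum_mul_pow_eq_zero (t := fun i => ⟪(x j : E), x i⟫) ?_ fun m => ?_)
  · intro i hij hinner
    rw [real_inner_self_eq_norm_sq, norm_eq_of_mem_sphere, one_pow,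
      inner_eq_one_iff_of_norm_eq_one (norm_eq_of_mem_sphere _) (norm_eq_of_mem_sphere _)] at hinner
    exact hij (hx (Subtype.ext hinner)).symm
  · simpa [Matrix.mulVec, dotProduct, mul_comm] using congrFun (hker m) j

theorem sum_mul_mul_pos_of_hasSum_mul_pow {f : ℝ → ℝ} {c : ℕ → ℝ} (hc : ∀ m, 0 < c m)
    (hf : ∀ u, |u| ≤ 1 → HasSum (fun m => c m * u ^ m) (f u))
    {x : ι → sphere (0 : E) 1} (hx : Injective x) {a : ι → ℝ} (ha : a ≠ 0) :
    0 < ∑ i, ∑ j, a i * a j * f ⟪(x i : E), x j⟫ := by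
  obtain ⟨m, hm⟩ := exists_sum_mul_mul_inner_pow_pos hx ha
  have habs (i j : ι) : |⟪(x i : E), x j⟫| ≤ 1 := by
    simpa [norm_eq_of_mem_sphere] using abs_real_inner_le_norm (x i : E) (x j)
  have hsum : HasSum (fun m => c m * ∑ i, ∑ j, a i * a j * ⟪(x i : E), x j⟫ ^ m)
      (∑ i, ∑ j, a i * a j * f ⟪(x i : E), x j⟫) := by
    have hterm : (fun m => c m * ∑ i, ∑ j, a i * a j * ⟪(x i : E), x j⟫ ^ m) =
        fun m => ∑ i, ∑ j, a i * a j * (c m * ⟪(x i : E), x j⟫ ^ m) := by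
      funext k
      simp only [mul_sum]
      exact sum_congr rfl fun i _ => sum_congr rfl fun j _ => by ring
    exact hterm ▸ hasSum_sum fun i _ => hasSum_sum fun j _ =>
      (hf _ (habs i j)).mul_left (a i * a j)
  exact (mul_pos (hc m) hm).trans_le <|
    le_hasSum hsum m fun k _ => mul_nonneg (hc k).le (sum_mul_mul_inner_pow_nonneg _ a k)

end InnerPow

def imqCoeff (γ : ℝ) (m : ℕ) : ℝ :=
  (√(1 + γ ^ 2))⁻¹ * Ring.multichoose (1 / 2 : ℝ) m * (2 * γ / (1 + γ ^ 2)) ^ m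

theorem imqCoeff_pos {γ : ℝ} (hγ : 0 < γ) (m : ℕ) : 0 < imqCoeff γ m :=
  mul_pos (mul_pos (by positivity) (Ring.multichoose_pos one_half_pos m)) (by positivity)

theorem hasSum_imqCoeff_mul_pow {γ u : ℝ} (hγ : |γ| ≠ 1) (hu : |u| ≤ 1) :
    HasSum (fun m => imqCoeff γ m * u ^ m) (√(1 - 2 * γ * u + γ ^ 2))⁻¹ := by
  set s := 2 * γ / (1 + γ ^ 2) with hs_def
  have hpos : 0 < 1 + γ ^ 2 := by positivity
  have hs : |s| < 1 := by
    have : 0 < (|γ| - 1) ^ 2 := sq_pos_of_ne_zero (sub_ne_zero.2 hγ)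
    rw [abs_div, abs_of_pos hpos, div_lt_one hpos, abs_mul, abs_two]
    nlinarith [sq_abs γ]
  have hsu : |s * u| < 1 := by
    rw [abs_mul]
    nlinarith [abs_nonneg s, abs_nonneg u]
  have hfactor : 1 - 2 * γ * u + γ ^ 2 = (1 + γ ^ 2) * (1 - s * u) := by
    rw [hs_def]
    field_simp
    ring
  rw [hfactor, Real.sqrt_mul hpos.le, Real.sqrt_eq_rpow (1 - s * u), mul_inv]
  have hcoeff : (fun m => imqCoeff γ m * u ^ m) =
      fun m => (√(1 + γ ^ 2))⁻¹ * (Ring.multichoose (1 / 2 : ℝ) m * (s * u) ^ m) := by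
    funext m
    rw [imqCoeff, ← hs_def, mul_pow]
    ring
  exact hcoeff ▸ (Real.hasSum_multichoose_mul_pow hsu (1 / 2)).mul_left _

end

/-- for `γ ∈ (0,1)` the Legendre coefficients `γ^d` of the inverse
multiquadric kernel are all strictly positive, hence (Schoenberg's criterion) the kernel
`K(x,y) = (1 − 2γ xᵀy + γ²)^{-1/2}` is strictly positive definite on `S²`. -/
theorem imq_strictly_positive_definite (γ : ℝ) (hγ : γ ∈ Set.Ioo (0 : ℝ) 1) :
    (∀ d : ℕ, 0 < γ ^ d) ∧
    (∀ (n : ℕ) (x : Fin n → S2), Function.Injective x →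
      ∀ a : Fin n → ℝ, a ≠ 0 →
        0 < ∑ i, ∑ j, a i * a j *
          (Real.sqrt (1 - 2 * γ * (inner ℝ (x i : E3) (x j : E3) : ℝ) + γ ^ 2))⁻¹) := by
  obtain ⟨hγ0, hγ1⟩ := hγ
  have hγ_abs : |γ| ≠ 1 := by rw [abs_of_pos hγ0]; exact hγ1.ne
  refine ⟨fun d => pow_pos hγ0 d, fun n x hx a ha => ?_⟩
  exact sum_mul_mul_pos_of_hasSum_mul_pow (imqCoeff_pos hγ0)
    (fun u hu => hasSum_imqCoeff_mul_pow hγ_abs hu) hx ha
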